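/- arXiv:1308.2802 — 4 statements merged into one kernel-verified Lean document; each statement's English description precedes it below -/
import Mathlib

section
/- Let S be a Levi monoid and let a, b ∈ S with aS ⊆ bS. Then the set [aS, bS] of all principal right ideals cS with aS ⊆ cS ⊆ bS is totally ordered by inclusion and finite. -/
/-- A length function on a monoid: a homomorphism to (ℕ, +) whose zero set is
exactly the set of units. -/
def IsLengthFunction {S : Type*} [Monoid S] (l : S → ℕ) : Prop :=
  (∀ a b : S, l (a * b) = l a + l b) ∧ ∀ a : S, l a = 0 ↔ IsUnit a

/-- An equidivisible monoid. -/
def Equidivisible (S : Type*) [Monoid S] : Prop :=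
  ∀ a b c d : S, a * b = c * d →
    (∃ u : S, a = c * u ∧ d = u * b) ∨ ∃ v : S, c = a * v ∧ b = v * d

/-- A Levi monoid: an equidivisible monoid equipped with a length function and
containing at least one non-unit. -/
def IsLeviMonoid (S : Type*) [Monoid S] : Prop :=
  Equidivisible S ∧ (∃ l : S → ℕ, IsLengthFunction l) ∧ ∃ a : S, ¬IsUnit a

/-- The principal right ideal `aS`. -/
def rIdeal {S : Type*} [Monoid S] (a : S) : Set S := Set.range (a * ·)

/-!
`aS ⊆ cS` exactly when `c` is a left divisor of `a`. Equidivisibility applied to `a = cu = dw`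
makes any two left divisors of `a` comparable under left divisibility, so the principal right
ideals above `aS` form a chain. A left divisor `c` of `a` has `λ c ≤ λ a`, and two comparable
divisors of equal length differ by a factor of length `0`, i.e. by a unit, so they generate the
same ideal: there are at most `λ a + 1` such ideals.
-/

section

variable {S : Type*} [Monoid S]

theorem rIdeal_subset_rIdeal_iff {a c : S} : rIdeal a ⊆ rIdeal c ↔ c ∣ a := by
  constructor
  · intro h
    obtain ⟨u, hu⟩ := h ⟨1, mul_one a⟩
    exact ⟨u, hu.symm⟩
  · rintro ⟨u, rfl⟩ _ ⟨z, rfl⟩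
    exact ⟨u * z, (mul_assoc c u z).symm⟩

theorem Equidivisible.dvd_total_of_dvd (h : Equidivisible S) {a c d : S} (hc : c ∣ a)
    (hd : d ∣ a) : c ∣ d ∨ d ∣ c := by
  obtain ⟨u, rfl⟩ := hc
  obtain ⟨w, hw⟩ := hd
  rcases h c u d w hw with ⟨t, ht, -⟩ | ⟨v, hv, -⟩
  · exact Or.inr ⟨t, ht⟩
  · exact Or.inl ⟨v, hv⟩

theorem Equidivisible.isChain_rIdeal_image_dvd (h : Equidivisible S) (a : S) :
    IsChain (· ⊆ ·) (rIdeal '' {c | c ∣ a}) := by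
  rintro _ ⟨c, hc, rfl⟩ _ ⟨d, hd, rfl⟩ -
  simp only [rIdeal_subset_rIdeal_iff]
  exact h.dvd_total_of_dvd hd hc

namespace IsLengthFunction

variable {l : S → ℕ} (hl : IsLengthFunction l)
include hl

theorem le_of_dvd {a c : S} (h : c ∣ a) : l c ≤ l a := by
  obtain ⟨u, rfl⟩ := h
  rw [hl.1]
  exact Nat.le_add_right _ _

theorem dvd_of_dvd_of_eq {c d : S} (h : d ∣ c) (hlen : l c = l d) : c ∣ d := by
  obtain ⟨t, rfl⟩ := h
  have ht : IsUnit t := (hl.2 t).mp (by rw [hl.1] at hlen; omega)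
  exact ht.dvd_mul_right.mp dvd_rfl

theorem rIdeal_eq_of_dvd_of_eq (hS : Equidivisible S) {a c d : S} (hc : c ∣ a) (hd : d ∣ a)
    (hlen : l c = l d) : rIdeal c = rIdeal d := by
  have hcd : c ∣ d ∧ d ∣ c := by
    rcases hS.dvd_total_of_dvd hc hd with h | h
    · exact ⟨h, hl.dvd_of_dvd_of_eq h hlen.symm⟩
    · exact ⟨hl.dvd_of_dvd_of_eq h hlen, h⟩
  exact (rIdeal_subset_rIdeal_iff.mpr hcd.2).antisymm (rIdeal_subset_rIdeal_iff.mpr hcd.1)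

theorem finite_rIdeal_image_dvd (hS : Equidivisible S) (a : S) :
    (rIdeal '' {c | c ∣ a}).Finite := by
  have hcover : rIdeal '' {c | c ∣ a} ⊆
      ⋃ n ∈ Set.Iic (l a), rIdeal '' {c | c ∣ a ∧ l c = n} := by
    rintro _ ⟨c, hc, rfl⟩
    exact Set.mem_biUnion (hl.le_of_dvd hc) ⟨c, ⟨hc, rfl⟩, rfl⟩
  refine Set.Finite.subset (Set.finite_Iic _ |>.biUnion fun n _ => Set.Subsingleton.finite ?_) hcover
  rintro _ ⟨c, ⟨hc, rfl⟩, rfl⟩ _ ⟨d, ⟨hd, hlen⟩, rfl⟩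
  exact hl.rIdeal_eq_of_dvd_of_eq hS hc hd hlen.symm

end IsLengthFunction

end

theorem stmt3_general {S : Type*} [Monoid S] (hS : IsLeviMonoid S) (a b : S) :
    IsChain (· ⊆ ·) {T : Set S | (∃ c : S, T = rIdeal c) ∧ rIdeal a ⊆ T ∧ T ⊆ rIdeal b} ∧
    Set.Finite {T : Set S | (∃ c : S, T = rIdeal c) ∧ rIdeal a ⊆ T ∧ T ⊆ rIdeal b} := by
  obtain ⟨hequi, ⟨l, hl⟩, -⟩ := hS
  have hsub : {T : Set S | (∃ c : S, T = rIdeal c) ∧ rIdeal a ⊆ T ∧ T ⊆ rIdeal b} ⊆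
      rIdeal '' {c | c ∣ a} := by
    rintro T ⟨⟨c, rfl⟩, hac, -⟩
    exact ⟨c, rIdeal_subset_rIdeal_iff.mp hac, rfl⟩
  exact ⟨(hequi.isChain_rIdeal_image_dvd a).mono hsub,
    (hl.finite_rIdeal_image_dvd hequi a).subset hsub⟩

theorem stmt3 {S : Type*} [Monoid S] (hS : IsLeviMonoid S) (a b : S)
    (hab : rIdeal a ⊆ rIdeal b) :
    IsChain (· ⊆ ·) {T : Set S | (∃ c : S, T = rIdeal c) ∧ rIdeal a ⊆ T ∧ T ⊆ rIdeal b} ∧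
    Set.Finite {T : Set S | (∃ c : S, T = rIdeal c) ∧ rIdeal a ⊆ T ∧ T ⊆ rIdeal b} :=
  stmt3_general hS a b
end

section
/- A left cancellative monoid S is right rigid if and only if it is equidivisible. -/
section
variable {S : Type*} [Monoid S]

theorem rIdeal_subset_rIdeal_iff_s8 {a b : S} : rIdeal a ⊆ rIdeal b ↔ ∃ u, a = b * u := by
  constructor
  · intro h
    obtain ⟨u, hu⟩ := h ⟨1, mul_one a⟩
    exact ⟨u, hu.symm⟩
  · rintro ⟨u, rfl⟩ _ ⟨s, rfl⟩
    exact ⟨u * s, (mul_assoc b u s).symm⟩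

theorem rIdeal_inter_nonempty_iff {a b : S} :
    (rIdeal a ∩ rIdeal b).Nonempty ↔ ∃ p q, a * p = b * q := by
  constructor
  · rintro ⟨_, ⟨p, rfl⟩, ⟨q, hq⟩⟩
    exact ⟨p, q, hq.symm⟩
  · rintro ⟨p, q, hpq⟩
    exact ⟨a * p, ⟨p, rfl⟩, ⟨q, hpq.symm⟩⟩

theorem Equidivisible.exists_eq_mul_or_exists_eq_mul (h : Equidivisible S) {a b c d : S}
    (hab : a * b = c * d) : (∃ u, a = c * u) ∨ ∃ v, c = a * v :=
  (h a b c d hab).imp (fun ⟨u, hu, _⟩ => ⟨u, hu⟩) fun ⟨v, hv, _⟩ => ⟨v, hv⟩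

/-- Left cancellation forces the cofactor: `c * (u * b) = a * b = c * d` gives `d = u * b`. -/
theorem Equidivisible.of_exists_eq_mul_or_exists_eq_mul [IsLeftCancelMul S]
    (h : ∀ a b c d : S, a * b = c * d → (∃ u, a = c * u) ∨ ∃ v, c = a * v) :
    Equidivisible S := by
  intro a b c d hab
  rcases h a b c d hab with ⟨u, rfl⟩ | ⟨v, rfl⟩
  · exact .inl ⟨u, rfl, mul_left_cancel (by rw [← mul_assoc, hab])⟩
  · exact .inr ⟨v, rfl, mul_left_cancel (by rw [← mul_assoc, ← hab])⟩

end

/-- A left cancellative monoid is right rigid (any two intersecting principal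
right ideals are comparable) iff it is equidivisible. -/
theorem stmt8 {S : Type*} [Monoid S]
    (hlc : ∀ a b c : S, a * b = a * c → b = c) :
    (∀ a b : S, (rIdeal a ∩ rIdeal b).Nonempty →
      rIdeal a ⊆ rIdeal b ∨ rIdeal b ⊆ rIdeal a) ↔ Equidivisible S := by
  have : IsLeftCancelMul S := ⟨fun a _ _ => hlc a _ _⟩
  simp only [rIdeal_inter_nonempty_iff, rIdeal_subset_rIdeal_iff_s8]
  constructor
  · intro hrigid
    exact Equidivisible.of_exists_eq_mul_or_exists_eq_mul fun a b c d hab =>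
      hrigid a c ⟨b, d, hab⟩
  · rintro hequi a b ⟨p, q, hpq⟩
    exact hequi.exists_eq_mul_or_exists_eq_mul hpq
end

section
/- Let S be a Levi monoid and let a ∈ S. Then the principal two-sided ideal SaS is a maximal element of the set of proper principal two-sided ideals of S (ordered by inclusion) if and only if a is an atom. -/
/-- An atom of a monoid: a non-unit that cannot be factored into two non-units. -/
def IsMonoidAtom {S : Type*} [Monoid S] (a : S) : Prop :=
  ¬IsUnit a ∧ ∀ b c : S, a = b * c → IsUnit b ∨ IsUnit c

/-- The principal two-sided ideal `SaS`. -/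
def tIdeal {S : Type*} [Monoid S] (a : S) : Set S := {x | ∃ s t : S, x = s * a * t}

/-!
A length function makes a product a unit exactly when both factors are a unit, and it
cannot increase when passing from `y` to an element of `SyS`. Hence `SaS` is
proper iff `a` is a non-unit. If `a = bc` with non-units `b, c`, then `SaS ⊆ SbS ≠ S`, and
equality would put `b` in `SaS`, forcing `λ(b) ≥ λ(a) = λ(b) + λ(c)`. Conversely, if `a` is
an atom and `a = sbt` with `b` a non-unit, then `s` and `t` must be units, so `b ∈ SaS`.
-/

section tIdeal

variable {S : Type*} [Monoid S]

theorem mem_tIdeal_self (a : S) : a ∈ tIdeal a := ⟨1, 1, by simp⟩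

theorem tIdeal_subset_iff {a b : S} : tIdeal a ⊆ tIdeal b ↔ a ∈ tIdeal b := by
  refine ⟨fun h => h (mem_tIdeal_self a), ?_⟩
  rintro ⟨s, t, rfl⟩ x ⟨p, q, rfl⟩
  exact ⟨p * s, t * q, by simp only [mul_assoc]⟩

theorem mul_mem_tIdeal_left (b c : S) : b * c ∈ tIdeal b := ⟨1, c, by simp⟩

theorem mem_tIdeal_of_isUnit {s t : S} (hs : IsUnit s) (ht : IsUnit t) (b : S) :
    b ∈ tIdeal (s * b * t) := by
  obtain ⟨u, rfl⟩ := hs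
  obtain ⟨v, rfl⟩ := ht
  exact ⟨↑u⁻¹, ↑v⁻¹, by simp [mul_assoc]⟩

theorem tIdeal_eq_univ_of_isUnit {a : S} (h : IsUnit a) : tIdeal a = Set.univ := by
  obtain ⟨u, rfl⟩ := h
  exact Set.eq_univ_of_forall fun y => ⟨y * ↑u⁻¹, 1, by simp⟩

end tIdeal

namespace IsLengthFunction

variable {S : Type*} [Monoid S] {l : S → ℕ}

theorem isUnit_mul_iff (hl : IsLengthFunction l) {a b : S} :
    IsUnit (a * b) ↔ IsUnit a ∧ IsUnit b := by
  simp only [← hl.2, hl.1, Nat.add_eq_zero_iff]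

theorem le_of_mem_tIdeal (hl : IsLengthFunction l) {x y : S} (h : x ∈ tIdeal y) :
    l y ≤ l x := by
  obtain ⟨s, t, rfl⟩ := h
  rw [hl.1, hl.1]
  omega

theorem tIdeal_eq_univ_iff (hl : IsLengthFunction l) {a : S} :
    tIdeal a = Set.univ ↔ IsUnit a := by
  refine ⟨fun h => ?_, tIdeal_eq_univ_of_isUnit⟩
  obtain ⟨s, t, hst⟩ := h ▸ Set.mem_univ (1 : S)
  have : IsUnit (s * a * t) := hst ▸ isUnit_one
  exact (hl.isUnit_mul_iff.1 (hl.isUnit_mul_iff.1 this).1).2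

theorem isUnit_of_tIdeal_mul_eq (hl : IsLengthFunction l) {b c : S}
    (h : tIdeal (b * c) = tIdeal b) : IsUnit c := by
  have hle := hl.le_of_mem_tIdeal (h ▸ mem_tIdeal_self b)
  rw [hl.1] at hle
  exact (hl.2 c).1 (by omega)

end IsLengthFunction

theorem IsMonoidAtom.tIdeal_eq_of_mem {S : Type*} [Monoid S] {l : S → ℕ}
    (hl : IsLengthFunction l) {a b : S} (ha : IsMonoidAtom a) (hb : ¬IsUnit b)
    (hab : a ∈ tIdeal b) : tIdeal a = tIdeal b := by
  obtain ⟨s, t, rfl⟩ := hab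
  have ht : IsUnit t :=
    (ha.2 (s * b) t rfl).resolve_left fun h => hb (hl.isUnit_mul_iff.1 h).2
  have hs : IsUnit s :=
    (ha.2 s (b * t) (mul_assoc s b t)).resolve_right fun h => hb (hl.isUnit_mul_iff.1 h).1
  exact (tIdeal_subset_iff.2 ⟨s, t, rfl⟩).antisymm
    (tIdeal_subset_iff.2 (mem_tIdeal_of_isUnit hs ht b))

theorem stmt9 {S : Type*} [Monoid S] (hS : IsLeviMonoid S) (a : S) :
    (tIdeal a ≠ Set.univ ∧
      ∀ b : S, tIdeal a ⊆ tIdeal b → tIdeal b ≠ Set.univ → tIdeal a = tIdeal b) ↔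
    IsMonoidAtom a := by
  obtain ⟨-, ⟨l, hl⟩, -⟩ := hS
  simp only [ne_eq, hl.tIdeal_eq_univ_iff]
  constructor
  · rintro ⟨ha, hmax⟩
    refine ⟨ha, fun b c hbc => or_iff_not_imp_left.2 fun hb => ?_⟩
    subst hbc
    exact hl.isUnit_of_tIdeal_mul_eq
      (hmax b (tIdeal_subset_iff.2 (mul_mem_tIdeal_left b c)) hb)
  · intro ha
    exact ⟨ha.1, fun b hab hb => ha.tIdeal_eq_of_mem hl hb (tIdeal_subset_iff.1 hab)⟩
end

section
/- Let S be a left Rees monoid. Then the following are equivalent: (i) S has a maximum proper principal left ideal, i.e. a proper principal left ideal containing every proper principal left ideal of S; (ii) the partially ordered set of principal left ideals of S under inclusion is an infinite descending chain order-isomorphic to the natural numbers with their reverse order; (iii) S is right reversible, i.e. Sa ∩ Sb ≠ ∅ for all a, b ∈ S. -/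
/-- A left Rees monoid: a left cancellative Levi monoid. -/
def IsLeftReesMonoid (S : Type*) [Monoid S] : Prop :=
  (∀ a b c : S, a * b = a * c → b = c) ∧ IsLeviMonoid S

/-- The principal left ideal `Sa`. -/
def lIdeal {S : Type*} [Monoid S] (a : S) : Set S := Set.range (· * a)

/-! Equidivisibility makes `Sm` and `Sb` comparable as soon as they meet, the smaller ideal belonging
to the longer element. Hence under right reversibility a non-unit `m` of least length generates the
maximum proper principal left ideal. Conversely, if `Sm` is that maximum, every non-unit is `s * m`
with `s` strictly shorter, so by induction on length every principal left ideal is some `S mⁿ`, and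
comparing lengths gives `S mⁿ ⊆ S mᵏ ↔ k ≤ n`. A chain of ideals is right reversible trivially. -/

section LeftIdeal

variable {S : Type*} [Monoid S]

lemma mem_lIdeal_self (a : S) : a ∈ lIdeal a := ⟨1, one_mul a⟩

lemma lIdeal_subset_lIdeal_iff {a b : S} : lIdeal b ⊆ lIdeal a ↔ ∃ s, b = s * a := by
  refine ⟨fun h => ?_, ?_⟩
  · obtain ⟨s, hs⟩ := h (mem_lIdeal_self b)
    exact ⟨s, hs.symm⟩
  · rintro ⟨s, rfl⟩ x ⟨t, rfl⟩
    exact ⟨t * s, mul_assoc t s a⟩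

lemma lIdeal_mul (a c : S) : lIdeal (a * c) = (· * c) '' lIdeal a := by
  simp only [lIdeal, ← Set.range_comp, Function.comp_def, mul_assoc]

lemma lIdeal_inter_lIdeal_nonempty_of_orderIso {α : Type*} [LinearOrder α]
    (e : {T : Set S // ∃ a : S, T = lIdeal a} ≃o α) (a b : S) :
    (lIdeal a ∩ lIdeal b).Nonempty := by
  rcases le_total (e ⟨lIdeal a, a, rfl⟩) (e ⟨lIdeal b, b, rfl⟩) with h | h
  · exact ⟨a, mem_lIdeal_self a, e.le_iff_le.mp h (mem_lIdeal_self a)⟩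
  · exact ⟨b, e.le_iff_le.mp h (mem_lIdeal_self b), mem_lIdeal_self b⟩

def IsMaxProperLIdeal (m : S) : Prop :=
  lIdeal m ≠ Set.univ ∧ ∀ b : S, lIdeal b ≠ Set.univ → lIdeal b ⊆ lIdeal m

end LeftIdeal

namespace IsLengthFunction

variable {S : Type*} [Monoid S] {l : S → ℕ}

lemma map_mul (hl : IsLengthFunction l) (a b : S) : l (a * b) = l a + l b := hl.1 a b

lemma eq_zero_iff (hl : IsLengthFunction l) (a : S) : l a = 0 ↔ IsUnit a := hl.2 a

lemma map_pow (hl : IsLengthFunction l) (m : S) (n : ℕ) : l (m ^ n) = n * l m := by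
  induction n with
  | zero => simpa using (hl.eq_zero_iff 1).mpr isUnit_one
  | succ k ih => rw [pow_succ, hl.map_mul, ih, Nat.succ_mul]

lemma lIdeal_eq_univ_iff (hl : IsLengthFunction l) {a : S} : lIdeal a = Set.univ ↔ IsUnit a := by
  refine ⟨fun h => ?_, fun ⟨u, hu⟩ => Set.eq_univ_of_forall fun x => ⟨x * ↑u⁻¹, by simp [← hu]⟩⟩
  obtain ⟨s, hs⟩ : (1 : S) ∈ lIdeal a := h ▸ Set.mem_univ 1
  have hlen := congrArg l hs
  rw [hl.map_mul, (hl.eq_zero_iff 1).mpr isUnit_one] at hlen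
  exact (hl.eq_zero_iff a).mp (by omega)

lemma lIdeal_pow_subset_lIdeal_pow_iff (hl : IsLengthFunction l) {m : S} (hm : ¬IsUnit m)
    {n k : ℕ} : lIdeal (m ^ n) ⊆ lIdeal (m ^ k) ↔ k ≤ n := by
  refine ⟨fun h => ?_, fun h => lIdeal_subset_lIdeal_iff.mpr ⟨m ^ (n - k), (pow_sub_mul_pow m h).symm⟩⟩
  obtain ⟨s, hs⟩ := lIdeal_subset_lIdeal_iff.mp h
  have hlen := congrArg l hs
  rw [hl.map_mul, hl.map_pow, hl.map_pow] at hlen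
  have hlm : 0 < l m := Nat.pos_of_ne_zero (mt (hl.eq_zero_iff m).mp hm)
  exact Nat.le_of_mul_le_mul_right (hlen ▸ Nat.le_add_left _ _) hlm

lemma not_isUnit_of_isMaxProperLIdeal (hl : IsLengthFunction l) {m : S}
    (hm : IsMaxProperLIdeal m) : ¬IsUnit m :=
  mt hl.lIdeal_eq_univ_iff.mpr hm.1

lemma exists_lIdeal_eq_lIdeal_pow (hl : IsLengthFunction l) {m : S} (hm : IsMaxProperLIdeal m)
    (a : S) : ∃ n : ℕ, lIdeal a = lIdeal (m ^ n) := by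
  induction hN : l a using Nat.strong_induction_on generalizing a with
  | _ N ih =>
  by_cases ha : IsUnit a
  · exact ⟨0, by rw [pow_zero, hl.lIdeal_eq_univ_iff.mpr ha, hl.lIdeal_eq_univ_iff.mpr isUnit_one]⟩
  obtain ⟨s, rfl⟩ := lIdeal_subset_lIdeal_iff.mp (hm.2 a (mt hl.lIdeal_eq_univ_iff.mp ha))
  have hshorter : l s < N := by
    have := (hl.eq_zero_iff m).not.mpr (hl.not_isUnit_of_isMaxProperLIdeal hm)
    rw [← hN, hl.map_mul]
    omega
  obtain ⟨k, hk⟩ := ih (l s) hshorter s rfl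
  exact ⟨k + 1, by rw [pow_succ, lIdeal_mul, lIdeal_mul, hk]⟩

theorem nonempty_orderIso_of_isMaxProperLIdeal (hl : IsLengthFunction l) {m : S}
    (hm : IsMaxProperLIdeal m) : Nonempty ({T : Set S // ∃ a : S, T = lIdeal a} ≃o ℕᵒᵈ) := by
  let powIdeal : ℕᵒᵈ ↪o {T : Set S // ∃ a : S, T = lIdeal a} :=
    OrderEmbedding.ofMapLEIff (fun n => ⟨lIdeal (m ^ OrderDual.ofDual n), _, rfl⟩)
      fun _ _ => hl.lIdeal_pow_subset_lIdeal_pow_iff (hl.not_isUnit_of_isMaxProperLIdeal hm)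
  have hsurj : Function.Surjective powIdeal := by
    rintro ⟨_, a, rfl⟩
    obtain ⟨n, hn⟩ := hl.exists_lIdeal_eq_lIdeal_pow hm a
    exact ⟨OrderDual.toDual n, Subtype.ext hn.symm⟩
  exact ⟨(OrderIso.ofSurjective powIdeal hsurj).symm⟩

lemma lIdeal_subset_lIdeal_of_length_le (hequi : Equidivisible S) (hl : IsLengthFunction l) {m b : S}
    (hmeet : (lIdeal m ∩ lIdeal b).Nonempty) (hlen : l m ≤ l b) :
    lIdeal b ⊆ lIdeal m := by
  obtain ⟨_, ⟨s, hs⟩, ⟨t, ht⟩⟩ := hmeet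
  rcases hequi s m t b (hs.trans ht.symm) with ⟨u, -, hu⟩ | ⟨v, -, hv⟩
  · exact lIdeal_subset_lIdeal_iff.mpr ⟨u, hu⟩
  · obtain ⟨v, rfl⟩ : IsUnit v := by
      have hlen' := congrArg l hv
      rw [hl.map_mul] at hlen'
      exact (hl.eq_zero_iff v).mp (by omega)
    exact lIdeal_subset_lIdeal_iff.mpr ⟨↑v⁻¹, by simp [hv]⟩

theorem exists_isMaxProperLIdeal (hequi : Equidivisible S) (hl : IsLengthFunction l)
    (hrev : ∀ a b : S, (lIdeal a ∩ lIdeal b).Nonempty) {a₀ : S} (ha₀ : ¬IsUnit a₀) :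
    ∃ m : S, IsMaxProperLIdeal m := by
  obtain ⟨m, hm, hmin⟩ := (InvImage.wf l wellFounded_lt).has_min {a | ¬IsUnit a} ⟨a₀, ha₀⟩
  refine ⟨m, mt hl.lIdeal_eq_univ_iff.mp hm, fun b hb => ?_⟩
  have hb : ¬IsUnit b := mt hl.lIdeal_eq_univ_iff.mpr hb
  exact lIdeal_subset_lIdeal_of_length_le hequi hl (hrev m b) (not_lt.mp (hmin b hb))

end IsLengthFunction

theorem stmt14 {S : Type*} [Monoid S] (hS : IsLeftReesMonoid S) :
    ((∃ a : S, lIdeal a ≠ Set.univ ∧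
        ∀ b : S, lIdeal b ≠ Set.univ → lIdeal b ⊆ lIdeal a) ↔
      Nonempty ({T : Set S // ∃ a : S, T = lIdeal a} ≃o ℕᵒᵈ)) ∧
    (Nonempty ({T : Set S // ∃ a : S, T = lIdeal a} ≃o ℕᵒᵈ) ↔
      ∀ a b : S, (lIdeal a ∩ lIdeal b).Nonempty) := by
  obtain ⟨-, hequi, ⟨l, hl⟩, a₀, ha₀⟩ := hS
  have max_to_chain : (∃ m : S, IsMaxProperLIdeal m) →
      Nonempty ({T : Set S // ∃ a : S, T = lIdeal a} ≃o ℕᵒᵈ) := fun ⟨_, hm⟩ =>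
    hl.nonempty_orderIso_of_isMaxProperLIdeal hm
  have chain_to_rev : Nonempty ({T : Set S // ∃ a : S, T = lIdeal a} ≃o ℕᵒᵈ) →
      ∀ a b : S, (lIdeal a ∩ lIdeal b).Nonempty := fun ⟨e⟩ =>
    lIdeal_inter_lIdeal_nonempty_of_orderIso e
  have rev_to_max := fun hrev => hl.exists_isMaxProperLIdeal hequi hrev ha₀
  exact ⟨⟨max_to_chain, fun h => rev_to_max (chain_to_rev h)⟩,
    ⟨chain_to_rev, fun h => max_to_chain (rev_to_max h)⟩⟩
end
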